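/- Let W : [0,1]² → [0,1] be a connected graphon, and let (G_n)_{n≥1} be a sequence of weighted graphs where G_n has n vertices and edge weights in [0,1], whose graphon representations converge to W in cut-distance. Let π_n denote the stationary distribution of the random walk on G_n and set α̃_n = n·Σ_{v∈V(G_n)} π_n(v)². Then α̃_n → α_W := (∫_{[0,1]²} W(x,y) dx dy)^{-2} · ∫_0^1 (∫_0^1 W(x,y) dy)² dx as n → ∞. -/

import Mathlib

open MeasureTheory Filter

noncomputable section

/-- `W` is a graphon: a symmetric measurable function `[0,1]² → [0,1]` (extended to `ℝ²`;
only its values on `[0,1]²` are ever used). -/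
def IsGraphon (W : ℝ → ℝ → ℝ) : Prop :=
  Measurable (Function.uncurry W) ∧ (∀ x y, W x y = W y x) ∧
    ∀ x y, W x y ∈ Set.Icc (0 : ℝ) 1

/-- The degree function of a graphon: `deg_W(x) = ∫_0^1 W(x,y) dy`. -/
def gDeg (W : ℝ → ℝ → ℝ) (x : ℝ) : ℝ := ∫ y in Set.Icc (0 : ℝ) 1, W x y

/-- A graphon is connected if `∫_A ∫_{A^c} W > 0` for every measurable `A ⊆ [0,1]` with
`0 < λ(A) < 1`. -/
def GraphonConnected (W : ℝ → ℝ → ℝ) : Prop :=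
  ∀ A : Set ℝ, MeasurableSet A → A ⊆ Set.Icc 0 1 → 0 < volume A → volume A < 1 →
    0 < ∫ x in A, ∫ y in Set.Icc (0 : ℝ) 1 \ A, W x y

/-- The cut-norm `‖U‖_□ = sup_{S,T Borel} |∫_S ∫_T U(x,y) dx dy|` (sets intersected
with `[0,1]`). -/
def cutNorm (U : ℝ → ℝ → ℝ) : ℝ :=
  ⨆ p : {S : Set ℝ // MeasurableSet S} × {T : Set ℝ // MeasurableSet T},
    |∫ x in p.1.1 ∩ Set.Icc (0 : ℝ) 1, ∫ y in p.2.1 ∩ Set.Icc (0 : ℝ) 1, U x y|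

/-- A measure-preserving automorphism of `[0,1]`. -/
def IsMPAuto (φ : ℝ → ℝ) : Prop :=
  MeasurePreserving φ (volume.restrict (Set.Icc (0 : ℝ) 1))
      (volume.restrict (Set.Icc (0 : ℝ) 1)) ∧
    Set.BijOn φ (Set.Icc 0 1) (Set.Icc 0 1)

/-- The cut-distance `δ_□(W₁, W₂) = inf_φ ‖W₁^φ − W₂‖_□` over measure-preserving
automorphisms `φ` of `[0,1]`. -/
def cutDist (W₁ W₂ : ℝ → ℝ → ℝ) : ℝ :=
  ⨅ φ : {φ : ℝ → ℝ // IsMPAuto φ}, cutNorm fun x y => W₁ (φ.1 x) (φ.1 y) - W₂ x y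

/-- The graphon representation `W_G(x,y) = w(v_{⌈nx⌉∨1}, v_{⌈ny⌉∨1})` of a weighted graph
on `n` vertices. -/
def graphonRep (n : ℕ) (w : Fin n → Fin n → ℝ) (x y : ℝ) : ℝ :=
  if h : 0 < n then
    w ⟨min (max (Int.toNat ⌈(n : ℝ) * x⌉) 1 - 1) (n - 1), by omega⟩
      ⟨min (max (Int.toNat ⌈(n : ℝ) * y⌉) 1 - 1) (n - 1), by omega⟩
  else 0

open Finset in
/-- The degree of a vertex of a weighted graph: the sum of the incident edge weights. -/
def wdeg {V : Type*} [Fintype V] (w : V → V → ℝ) (v : V) : ℝ := ∑ u, w v u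

open Finset in
/-- The stationary distribution of the random walk on a weighted graph. -/
def statDist {V : Type*} [Fintype V] (w : V → V → ℝ) (v : V) : ℝ :=
  wdeg w v / ∑ u, wdeg w u

/-- A weighted graph: symmetric weights in `[0,1]`, no loops. -/
def IsWeightedGraph {V : Type*} (w : V → V → ℝ) : Prop :=
  (∀ x y, w x y = w y x) ∧ (∀ x y, w x y ∈ Set.Icc (0 : ℝ) 1) ∧ (∀ x, w x x = 0)

/-!
For a weighted graph `G` on `n` vertices the degree function of `W_G` equals `deg v / n` on the
`v`-th interval of length `1/n`, so `α_{W_G} = (∫ deg_{W_G})⁻² ∫ deg_{W_G}²` is exactly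
`n Σ_v π(v)²`. It therefore suffices that `α` is continuous in the cut distance at `W`.
Splitting `[0,1]` according to the sign of `deg_V - deg_W` gives
`‖deg_V - deg_W‖₁ ≤ 2 ‖V - W‖_□`, hence `∫ deg` and `∫ deg²` move by at most `‖V - W‖_□` and
`4 ‖V - W‖_□`; both are invariant under measure-preserving relabelings, so the same bounds hold
with the cut distance. Connectivity makes `∫∫ W` positive, so `α` is continuous at `W`.
-/

open Set

lemma abs_le_one_of_mem_Icc {a : ℝ} (ha : a ∈ Icc (0 : ℝ) 1) : |a| ≤ 1 :=
  (abs_of_nonneg ha.1).trans_le ha.2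

lemma integrableOn_Icc_of_abs_le {f : ℝ → ℝ} (hf : Measurable f) {C : ℝ} (hC : ∀ x, |f x| ≤ C) :
    IntegrableOn f (Icc 0 1) :=
  Integrable.of_bound hf.aestronglyMeasurable C (ae_of_all _ hC)

lemma abs_setIntegral_le_of_subset_Icc {f : ℝ → ℝ} {s : Set ℝ} (hs : s ⊆ Icc 0 1) {C : ℝ}
    (hC : ∀ x, |f x| ≤ C) : |∫ x in s, f x| ≤ C := by
  have hC₀ : 0 ≤ C := (abs_nonneg _).trans (hC 0)
  have hs₁ : volume.real s ≤ 1 := by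
    simpa using measureReal_mono hs (measure_Icc_lt_top (μ := volume)).ne
  calc |∫ x in s, f x| = ‖∫ x in s, f x‖ := (Real.norm_eq_abs _).symm
    _ ≤ C * volume.real s :=
        norm_setIntegral_le_of_norm_le_const ((measure_mono hs).trans_lt measure_Icc_lt_top)
          fun x _ => hC x
    _ ≤ C := mul_le_of_le_one_right hC₀ hs₁

theorem MeasureTheory.MeasurePreserving.integral_comp_of_aestronglyMeasurable {α β E : Type*}
    [MeasurableSpace α] [MeasurableSpace β] [NormedAddCommGroup E] [NormedSpace ℝ E]
    {μ : Measure α} {ν : Measure β} {φ : α → β} (hφ : MeasurePreserving φ μ ν) {g : β → E}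
    (hg : AEStronglyMeasurable g ν) : ∫ x, g (φ x) ∂μ = ∫ y, g y ∂ν := by
  rw [← integral_map hφ.measurable.aemeasurable (hφ.map_eq ▸ hg), hφ.map_eq]

section Degree

variable {U V W : ℝ → ℝ → ℝ}

lemma measurable_gDeg (hW : Measurable (Function.uncurry W)) : Measurable (gDeg W) :=
  (hW.stronglyMeasurable.integral_prod_right (ν := volume.restrict (Icc 0 1))).measurable

lemma abs_gDeg_le_one (hW : ∀ x y, |W x y| ≤ 1) (x : ℝ) : |gDeg W x| ≤ 1 :=
  abs_setIntegral_le_of_subset_Icc subset_rfl (hW x)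

lemma integrableOn_gDeg (hWm : Measurable (Function.uncurry W)) (hWb : ∀ x y, |W x y| ≤ 1) :
    IntegrableOn (gDeg W) (Icc 0 1) :=
  integrableOn_Icc_of_abs_le (measurable_gDeg hWm) (abs_gDeg_le_one hWb)

lemma integrableOn_gDeg_sq (hWm : Measurable (Function.uncurry W)) (hWb : ∀ x y, |W x y| ≤ 1) :
    IntegrableOn (fun x => gDeg W x ^ 2) (Icc 0 1) :=
  integrableOn_Icc_of_abs_le ((measurable_gDeg hWm).pow_const 2) (C := 1)
    fun x => by rw [abs_pow]; exact pow_le_one₀ (abs_nonneg _) (abs_gDeg_le_one hWb x)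

lemma gDeg_sub_gDeg (hVm : Measurable (Function.uncurry V)) (hWm : Measurable (Function.uncurry W))
    (hVb : ∀ x y, |V x y| ≤ 1) (hWb : ∀ x y, |W x y| ≤ 1) (x : ℝ) :
    gDeg V x - gDeg W x = ∫ y in Icc 0 1, (V x y - W x y) :=
  (integral_sub (integrableOn_Icc_of_abs_le hVm.of_uncurry_left (hVb x))
    (integrableOn_Icc_of_abs_le hWm.of_uncurry_left (hWb x))).symm

lemma abs_integral_le_cutNorm {C : ℝ} (hU : ∀ x y, |U x y| ≤ C) {S T : Set ℝ}
    (hS : MeasurableSet S) (hT : MeasurableSet T) :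
    |∫ x in S ∩ Icc 0 1, ∫ y in T ∩ Icc 0 1, U x y| ≤ cutNorm U := by
  have hbound : ∀ S T : Set ℝ, |∫ x in S ∩ Icc 0 1, ∫ y in T ∩ Icc 0 1, U x y| ≤ C :=
    fun S T => abs_setIntegral_le_of_subset_Icc inter_subset_right
      fun x => abs_setIntegral_le_of_subset_Icc inter_subset_right (hU x)
  exact le_ciSup (f := fun p : {S : Set ℝ // MeasurableSet S} × {T : Set ℝ // MeasurableSet T} =>
      |∫ x in p.1.1 ∩ Icc 0 1, ∫ y in p.2.1 ∩ Icc 0 1, U x y|)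
    ⟨C, by rintro _ ⟨p, rfl⟩; exact hbound _ _⟩ (⟨S, hS⟩, ⟨T, hT⟩)

lemma abs_setIntegral_gDeg_sub_le_cutNorm (hVm : Measurable (Function.uncurry V))
    (hWm : Measurable (Function.uncurry W)) (hVb : ∀ x y, |V x y| ≤ 1) (hWb : ∀ x y, |W x y| ≤ 1)
    {S : Set ℝ} (hS : MeasurableSet S) :
    |∫ x in S ∩ Icc 0 1, (gDeg V x - gDeg W x)| ≤ cutNorm fun x y => V x y - W x y := by
  have h := abs_integral_le_cutNorm (U := fun x y => V x y - W x y) (C := 2)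
    (fun x y => (abs_sub (V x y) (W x y)).trans (by linarith [hVb x y, hWb x y])) hS
    MeasurableSet.univ
  rw [univ_inter] at h
  rwa [setIntegral_congr_fun (hS.inter measurableSet_Icc)
    fun x _ => gDeg_sub_gDeg hVm hWm hVb hWb x]

lemma abs_integral_gDeg_sub_le_cutNorm (hVm : Measurable (Function.uncurry V))
    (hWm : Measurable (Function.uncurry W)) (hVb : ∀ x y, |V x y| ≤ 1) (hWb : ∀ x y, |W x y| ≤ 1) :
    |(∫ x in Icc 0 1, gDeg V x) - ∫ x in Icc 0 1, gDeg W x| ≤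
      cutNorm fun x y => V x y - W x y := by
  rw [← integral_sub (integrableOn_gDeg hVm hVb) (integrableOn_gDeg hWm hWb)]
  simpa using abs_setIntegral_gDeg_sub_le_cutNorm hVm hWm hVb hWb MeasurableSet.univ

lemma integral_abs_gDeg_sub_le_cutNorm (hVm : Measurable (Function.uncurry V))
    (hWm : Measurable (Function.uncurry W)) (hVb : ∀ x y, |V x y| ≤ 1) (hWb : ∀ x y, |W x y| ≤ 1) :
    ∫ x in Icc 0 1, |gDeg V x - gDeg W x| ≤ 2 * cutNorm fun x y => V x y - W x y := by
  set S := {x | gDeg W x ≤ gDeg V x}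
  have hS : MeasurableSet S := measurableSet_le (measurable_gDeg hWm) (measurable_gDeg hVm)
  have hpos : ∫ x in S ∩ Icc 0 1, |gDeg V x - gDeg W x| =
      ∫ x in S ∩ Icc 0 1, (gDeg V x - gDeg W x) :=
    setIntegral_congr_fun (hS.inter measurableSet_Icc)
      fun x hx => abs_of_nonneg (sub_nonneg.2 hx.1)
  have hneg : ∫ x in Sᶜ ∩ Icc 0 1, |gDeg V x - gDeg W x| =
      -∫ x in Sᶜ ∩ Icc 0 1, (gDeg V x - gDeg W x) := by
    rw [← integral_neg]
    exact setIntegral_congr_fun (hS.compl.inter measurableSet_Icc)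
      fun x hx => abs_of_neg (sub_neg.2 (not_le.1 hx.1))
  have hint : IntegrableOn (fun x => |gDeg V x - gDeg W x|) (Icc 0 1) :=
    ((integrableOn_gDeg hVm hVb).sub (integrableOn_gDeg hWm hWb)).abs
  rw [← integral_add_compl hS hint,
    Measure.restrict_restrict hS, Measure.restrict_restrict hS.compl, hpos, hneg]
  linarith [le_abs_self (∫ x in S ∩ Icc 0 1, (gDeg V x - gDeg W x)),
    neg_le_abs (∫ x in Sᶜ ∩ Icc 0 1, (gDeg V x - gDeg W x)),
    abs_setIntegral_gDeg_sub_le_cutNorm hVm hWm hVb hWb hS,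
    abs_setIntegral_gDeg_sub_le_cutNorm hVm hWm hVb hWb hS.compl]

lemma abs_sq_sub_sq_le_two_mul {a b : ℝ} (ha : |a| ≤ 1) (hb : |b| ≤ 1) :
    |a ^ 2 - b ^ 2| ≤ 2 * |a - b| := by
  rw [sq_sub_sq, abs_mul]
  exact mul_le_mul_of_nonneg_right ((abs_add_le a b).trans (by linarith)) (abs_nonneg _)

lemma abs_integral_gDeg_sq_sub_le_cutNorm (hVm : Measurable (Function.uncurry V))
    (hWm : Measurable (Function.uncurry W)) (hVb : ∀ x y, |V x y| ≤ 1) (hWb : ∀ x y, |W x y| ≤ 1) :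
    |(∫ x in Icc 0 1, gDeg V x ^ 2) - ∫ x in Icc 0 1, gDeg W x ^ 2| ≤
      4 * cutNorm fun x y => V x y - W x y := by
  have hV := integrableOn_gDeg hVm hVb
  have hW := integrableOn_gDeg hWm hWb
  rw [← integral_sub (integrableOn_gDeg_sq hVm hVb) (integrableOn_gDeg_sq hWm hWb)]
  calc |∫ x in Icc 0 1, (gDeg V x ^ 2 - gDeg W x ^ 2)|
      ≤ ∫ x in Icc 0 1, |gDeg V x ^ 2 - gDeg W x ^ 2| := abs_integral_le_integral_abs
    _ ≤ ∫ x in Icc 0 1, 2 * |gDeg V x - gDeg W x| :=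
        integral_mono_of_nonneg (ae_of_all _ fun _ => abs_nonneg _)
          ((hV.sub hW).abs.const_mul 2) (ae_of_all _ fun x =>
            abs_sq_sub_sq_le_two_mul (abs_gDeg_le_one hVb x) (abs_gDeg_le_one hWb x))
    _ = 2 * ∫ x in Icc 0 1, |gDeg V x - gDeg W x| := integral_const_mul _ _
    _ ≤ 4 * cutNorm fun x y => V x y - W x y := by
        linarith [integral_abs_gDeg_sub_le_cutNorm hVm hWm hVb hWb]

end Degree

section Relabel

variable {V W : ℝ → ℝ → ℝ} {φ : ℝ → ℝ}

lemma measurable_relabel (hVm : Measurable (Function.uncurry V)) (hφ : Measurable φ) :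
    Measurable (Function.uncurry fun x y => V (φ x) (φ y)) :=
  hVm.comp (hφ.prodMap hφ)

lemma gDeg_relabel (hVm : Measurable (Function.uncurry V)) (hφ : IsMPAuto φ) (x : ℝ) :
    gDeg (fun x y => V (φ x) (φ y)) x = gDeg V (φ x) :=
  hφ.1.integral_comp_of_aestronglyMeasurable hVm.of_uncurry_left.aestronglyMeasurable

lemma integral_gDeg_relabel (hVm : Measurable (Function.uncurry V)) (hφ : IsMPAuto φ) :
    ∫ x in Icc 0 1, gDeg (fun x y => V (φ x) (φ y)) x = ∫ x in Icc 0 1, gDeg V x := by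
  simp_rw [gDeg_relabel hVm hφ]
  exact hφ.1.integral_comp_of_aestronglyMeasurable (measurable_gDeg hVm).aestronglyMeasurable

lemma integral_gDeg_sq_relabel (hVm : Measurable (Function.uncurry V)) (hφ : IsMPAuto φ) :
    ∫ x in Icc 0 1, gDeg (fun x y => V (φ x) (φ y)) x ^ 2 = ∫ x in Icc 0 1, gDeg V x ^ 2 := by
  simp_rw [gDeg_relabel hVm hφ]
  exact hφ.1.integral_comp_of_aestronglyMeasurable
    ((measurable_gDeg hVm).pow_const 2).aestronglyMeasurable

lemma le_mul_cutDist {a c : ℝ} (hc : 0 ≤ c)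
    (h : ∀ φ, IsMPAuto φ → a ≤ c * cutNorm fun x y => V (φ x) (φ y) - W x y) :
    a ≤ c * cutDist V W := by
  have : Nonempty {φ : ℝ → ℝ // IsMPAuto φ} := ⟨⟨id, MeasurePreserving.id _, bijOn_id _⟩⟩
  rw [cutDist, Real.mul_iInf_of_nonneg hc]
  exact le_ciInf fun φ => h φ.1 φ.2

lemma abs_integral_gDeg_sub_le_cutDist (hVm : Measurable (Function.uncurry V))
    (hWm : Measurable (Function.uncurry W)) (hVb : ∀ x y, |V x y| ≤ 1) (hWb : ∀ x y, |W x y| ≤ 1) :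
    |(∫ x in Icc 0 1, gDeg V x) - ∫ x in Icc 0 1, gDeg W x| ≤ cutDist V W := by
  simpa using le_mul_cutDist zero_le_one fun φ hφ => by
    rw [one_mul, ← integral_gDeg_relabel hVm hφ]
    exact abs_integral_gDeg_sub_le_cutNorm (measurable_relabel hVm hφ.1.measurable) hWm
      (fun x y => hVb _ _) hWb

lemma abs_integral_gDeg_sq_sub_le_cutDist (hVm : Measurable (Function.uncurry V))
    (hWm : Measurable (Function.uncurry W)) (hVb : ∀ x y, |V x y| ≤ 1) (hWb : ∀ x y, |W x y| ≤ 1) :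
    |(∫ x in Icc 0 1, gDeg V x ^ 2) - ∫ x in Icc 0 1, gDeg W x ^ 2| ≤ 4 * cutDist V W :=
  le_mul_cutDist zero_le_four fun φ hφ => by
    rw [← integral_gDeg_sq_relabel hVm hφ]
    exact abs_integral_gDeg_sq_sub_le_cutNorm (measurable_relabel hVm hφ.1.measurable) hWm
      (fun x y => hVb _ _) hWb

end Relabel

lemma integral_gDeg_pos {W : ℝ → ℝ → ℝ} (hWm : Measurable (Function.uncurry W))
    (hWI : ∀ x y, W x y ∈ Icc (0 : ℝ) 1) (hconn : GraphonConnected W) :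
    0 < ∫ x in Icc 0 1, gDeg W x := by
  set A : Set ℝ := Icc 0 2⁻¹
  have hA : A ⊆ Icc 0 1 := Icc_subset_Icc_right (by norm_num)
  have hdeg : IntegrableOn (gDeg W) (Icc 0 1) :=
    integrableOn_gDeg hWm fun x y => abs_le_one_of_mem_Icc (hWI x y)
  have hdeg₀ : ∀ x, 0 ≤ gDeg W x := fun x =>
    setIntegral_nonneg measurableSet_Icc fun y _ => (hWI x y).1
  calc 0 < ∫ x in A, ∫ y in Icc 0 1 \ A, W x y :=
        hconn A measurableSet_Icc hA (by simp [A]) (by simp [A])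
    _ ≤ ∫ x in A, gDeg W x := by
        refine integral_mono_of_nonneg (ae_of_all _ fun x => ?_) (hdeg.mono_set hA)
          (ae_of_all _ fun x => ?_)
        · exact setIntegral_nonneg (measurableSet_Icc.diff measurableSet_Icc)
            fun y _ => (hWI x y).1
        · exact setIntegral_mono_set (integrableOn_Icc_of_abs_le hWm.of_uncurry_left
            fun y => abs_le_one_of_mem_Icc (hWI x y))
            (ae_of_all _ fun y => (hWI x y).1) sdiff_subset.eventuallyLE
    _ ≤ ∫ x in Icc 0 1, gDeg W x :=
        setIntegral_mono_set hdeg (ae_of_all _ hdeg₀) hA.eventuallyLE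

def alphaW (W : ℝ → ℝ → ℝ) : ℝ :=
  (∫ x in Icc 0 1, gDeg W x)⁻¹ ^ 2 * ∫ x in Icc 0 1, gDeg W x ^ 2

lemma tendsto_of_abs_sub_le_mul {ι : Type*} {l : Filter ι} {f g : ι → ℝ} {a c : ℝ}
    (h : ∀ᶠ i in l, |f i - a| ≤ c * g i) (hg : Tendsto g l (nhds 0)) : Tendsto f l (nhds a) :=
  tendsto_sub_nhds_zero_iff.1 (squeeze_zero_norm' h (by simpa using hg.const_mul c))

lemma tendsto_alphaW_of_tendsto_cutDist {ι : Type*} {l : Filter ι} {V : ι → ℝ → ℝ → ℝ}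
    {W : ℝ → ℝ → ℝ} (hV : ∀ᶠ i in l, Measurable (Function.uncurry (V i)) ∧ ∀ x y, |V i x y| ≤ 1)
    (hWm : Measurable (Function.uncurry W)) (hWb : ∀ x y, |W x y| ≤ 1)
    (hW₀ : ∫ x in Icc 0 1, gDeg W x ≠ 0) (hVW : Tendsto (fun i => cutDist (V i) W) l (nhds 0)) :
    Tendsto (fun i => alphaW (V i)) l (nhds (alphaW W)) := by
  have hdeg : Tendsto (fun i => ∫ x in Icc 0 1, gDeg (V i) x) l
      (nhds (∫ x in Icc 0 1, gDeg W x)) :=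
    tendsto_of_abs_sub_le_mul (c := 1) (hV.mono fun i hi => by
      simpa using abs_integral_gDeg_sub_le_cutDist hi.1 hWm hi.2 hWb) hVW
  have hdeg_sq : Tendsto (fun i => ∫ x in Icc 0 1, gDeg (V i) x ^ 2) l
      (nhds (∫ x in Icc 0 1, gDeg W x ^ 2)) :=
    tendsto_of_abs_sub_le_mul
      (hV.mono fun i hi => abs_integral_gDeg_sq_sub_le_cutDist hi.1 hWm hi.2 hWb) hVW
  exact ((hdeg.inv₀ hW₀).pow 2).mul hdeg_sq

section StepGraphon

variable {n : ℕ}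

/-- The 0-based index of the vertex `v_{⌈nx⌉ ∨ 1}` used by `graphonRep`. -/
def stepIndex (hn : 0 < n) (x : ℝ) : Fin n :=
  ⟨min (max (Int.toNat ⌈(n : ℝ) * x⌉) 1 - 1) (n - 1), by omega⟩

lemma graphonRep_of_pos (hn : 0 < n) (w : Fin n → Fin n → ℝ) (x y : ℝ) :
    graphonRep n w x y = w (stepIndex hn x) (stepIndex hn y) :=
  dif_pos hn

lemma measurable_stepIndex (hn : 0 < n) : Measurable (stepIndex hn) :=
  (Measurable.of_discrete
    (f := fun z : ℤ => (⟨min (max z.toNat 1 - 1) (n - 1), by omega⟩ : Fin n))).comp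
      (Int.measurable_ceil.comp (measurable_const_mul _))

lemma stepIndex_of_mem_Ioc (hn : 0 < n) (v : Fin n) {x : ℝ}
    (hx : x ∈ Ioc ((v : ℝ) / n) ((v + 1) / n)) : stepIndex hn x = v := by
  have hn' : (0 : ℝ) < n := by exact_mod_cast hn
  rw [mem_Ioc, div_lt_iff₀ hn', le_div_iff₀ hn'] at hx
  have hceil : ⌈(n : ℝ) * x⌉ = (v : ℤ) + 1 := by
    rw [Int.ceil_eq_iff]
    push_cast
    constructor <;> linarith
  ext
  simp only [stepIndex, hceil]
  omega

lemma measurable_graphonRep (hn : 0 < n) (w : Fin n → Fin n → ℝ) :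
    Measurable (Function.uncurry (graphonRep n w)) := by
  simp only [Function.uncurry_def, graphonRep_of_pos hn]
  exact (Measurable.of_discrete (f := fun p : Fin n × Fin n => w p.1 p.2)).comp
    (((measurable_stepIndex hn).comp measurable_fst).prodMk
      ((measurable_stepIndex hn).comp measurable_snd))

lemma integral_comp_stepIndex (hn : 0 < n) (F : Fin n → ℝ) :
    ∫ x in Icc 0 1, F (stepIndex hn x) = (∑ v, F v) / n := by
  have hn' : (0 : ℝ) < n := by exact_mod_cast hn
  set a : ℕ → ℝ := fun k => k / n
  have ha : Monotone a := fun i j h => by simp only [a]; gcongr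
  have hF : IntegrableOn (fun x => F (stepIndex hn x)) (Icc 0 1) :=
    integrableOn_Icc_of_abs_le (Measurable.of_discrete.comp (measurable_stepIndex hn))
      fun x => Finset.single_le_sum (fun v _ => abs_nonneg (F v)) (Finset.mem_univ _)
  have hpiece : ∀ v : Fin n, ∫ x in a v..a (v + 1), F (stepIndex hn x) = F v / n := by
    intro v
    rw [intervalIntegral.integral_of_le (ha (Nat.le_succ _)),
      setIntegral_congr_fun measurableSet_Ioc fun x hx => congrArg F
        (stepIndex_of_mem_Ioc hn v (by simpa [a] using hx)),
      setIntegral_const, Real.volume_real_Ioc, smul_eq_mul]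
    have hlen : a (v + 1) - a v = 1 / n := by simp only [a]; push_cast; ring
    rw [Nat.succ_eq_add_one, hlen, max_eq_left (by positivity)]
    ring
  have hint : ∀ k < n, IntervalIntegrable (fun x => F (stepIndex hn x)) volume (a k) (a (k + 1)) :=
    fun k hk => IntegrableOn.intervalIntegrable <| hF.mono_set <| by
      rw [uIcc_of_le (ha (Nat.le_succ _))]
      exact Icc_subset_Icc (by positivity) ((div_le_one hn').2 (by exact_mod_cast hk))
  rw [integral_Icc_eq_integral_Ioc, ← intervalIntegral.integral_of_le zero_le_one,
    show (0 : ℝ) = a 0 by simp [a], show (1 : ℝ) = a n by simp [a, hn'.ne'],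
    ← intervalIntegral.sum_integral_adjacent_intervals hint, Finset.sum_range, Finset.sum_div]
  exact Finset.sum_congr rfl fun v _ => by simpa using hpiece v

lemma gDeg_graphonRep (hn : 0 < n) (w : Fin n → Fin n → ℝ) (x : ℝ) :
    gDeg (graphonRep n w) x = wdeg w (stepIndex hn x) / n := by
  simp_rw [gDeg, graphonRep_of_pos hn]
  exact integral_comp_stepIndex hn _

lemma integral_gDeg_graphonRep (hn : 0 < n) (w : Fin n → Fin n → ℝ) :
    ∫ x in Icc 0 1, gDeg (graphonRep n w) x = (∑ v, wdeg w v) / n ^ 2 := by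
  simp_rw [gDeg_graphonRep hn]
  rw [integral_comp_stepIndex hn fun v => wdeg w v / n, ← Finset.sum_div]
  ring

lemma integral_gDeg_sq_graphonRep (hn : 0 < n) (w : Fin n → Fin n → ℝ) :
    ∫ x in Icc 0 1, gDeg (graphonRep n w) x ^ 2 = (∑ v, wdeg w v ^ 2) / n ^ 3 := by
  simp_rw [gDeg_graphonRep hn]
  rw [integral_comp_stepIndex hn fun v => (wdeg w v / n) ^ 2]
  simp only [div_pow, ← Finset.sum_div]
  ring

end StepGraphon

lemma alphaW_graphonRep {n : ℕ} (hn : 0 < n) (w : Fin n → Fin n → ℝ) :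
    alphaW (graphonRep n w) = n * ∑ v, statDist w v ^ 2 := by
  rw [alphaW, integral_gDeg_graphonRep hn, integral_gDeg_sq_graphonRep hn]
  simp only [statDist, div_pow, ← Finset.sum_div]
  rcases eq_or_ne (∑ u, wdeg w u) 0 with h | h
  · simp [h]
  · field_simp

open Finset in
/-- If `W` is a connected graphon and the graphon representations of the
weighted graphs `G_n` converge to `W` in cut-distance, then
`α̃_n = n·Σ_v π_n(v)² → α_W = (∫∫W)⁻²·∫ deg_W²`. -/
theorem alphaTilde_tendsto_alphaW (W : ℝ → ℝ → ℝ) (hW : IsGraphon W)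
    (hconn : GraphonConnected W)
    (w : (n : ℕ) → Fin n → Fin n → ℝ)
    (hWG : ∀ n : ℕ, 1 ≤ n → IsWeightedGraph (w n))
    (hconv : Tendsto (fun n => cutDist (graphonRep n (w n)) W) atTop (nhds 0)) :
    Tendsto (fun n : ℕ => (n : ℝ) * ∑ v, statDist (w n) v ^ 2) atTop
      (nhds ((∫ x in Set.Icc (0 : ℝ) 1, ∫ y in Set.Icc (0 : ℝ) 1, W x y)⁻¹ ^ 2 *
        ∫ x in Set.Icc (0 : ℝ) 1, gDeg W x ^ 2)) := by
  obtain ⟨hWm, -, hWI⟩ := hW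
  have hrep : ∀ᶠ n in atTop, Measurable (Function.uncurry (graphonRep n (w n))) ∧
      ∀ x y, |graphonRep n (w n) x y| ≤ 1 :=
    (eventually_ge_atTop 1).mono fun n hn => ⟨measurable_graphonRep hn _, fun x y => by
      rw [graphonRep_of_pos hn]; exact abs_le_one_of_mem_Icc ((hWG n hn).2.1 _ _)⟩
  refine (tendsto_alphaW_of_tendsto_cutDist hrep hWm (fun x y => abs_le_one_of_mem_Icc (hWI x y))
    (integral_gDeg_pos hWm hWI hconn).ne' hconv).congr' ?_
  filter_upwards [eventually_ge_atTop 1] with n hn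
  exact alphaW_graphonRep hn (w n)

end
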